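/- Let c, D > 0 and let G be a finite Borel measure on [0,∞). For every fixed t ≥ 0, the integral ∫_0^∞ |R(1, t+h, t)| dh is finite if and only if ∫_{[0, c/(2D))} μ^{−2} G(dμ) < ∞ (with the convention that the integrand equals +∞ at μ = 0, so that finiteness forces G({0}) = 0). That is, the spherical hyperbolic diffusion random field is short-range dependent at coincident spatial points if and only if μ^{−2}G(dμ) is integrable in a neighbourhood of zero. -/

import Mathlib

open MeasureTheory Real Set

/-- `H̃₁(μ,t)` for the subcritical regime `0 ≤ μ < c/(2D)`. -/
noncomputable def Htilde1 (c D μ t : ℝ) : ℝ :=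
  Real.exp (-(c ^ 2 * t) / (2 * D)) *
    (Real.cosh (c * t * Real.sqrt (c ^ 2 / (4 * D ^ 2) - μ ^ 2)) +
      c / (2 * D * Real.sqrt (c ^ 2 / (4 * D ^ 2) - μ ^ 2)) *
        Real.sinh (c * t * Real.sqrt (c ^ 2 / (4 * D ^ 2) - μ ^ 2)))

/-- `H̃₂(μ,t)` for the supercritical regime `μ > c/(2D)`. -/
noncomputable def Htilde2 (c D μ t : ℝ) : ℝ :=
  Real.exp (-(c ^ 2 * t) / (2 * D)) *
    (Real.cos (c * t * Real.sqrt (μ ^ 2 - c ^ 2 / (4 * D ^ 2))) +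
      c / (2 * D * Real.sqrt (μ ^ 2 - c ^ 2 / (4 * D ^ 2))) *
        Real.sin (c * t * Real.sqrt (μ ^ 2 - c ^ 2 / (4 * D ^ 2))))

/-- `H̃(μ,t)`, pieced together from `H̃₁`, the value at `μ = c/(2D)`, and `H̃₂`. -/
noncomputable def Htilde (c D μ t : ℝ) : ℝ :=
  if μ < c / (2 * D) then Htilde1 c D μ t
  else if μ = c / (2 * D) then Real.exp (-(c ^ 2 * t) / (2 * D)) * (1 + c ^ 2 * t / (2 * D))
  else Htilde2 c D μ t

/-!
Write `κ = c/(2D)` and `λ(μ) = c (κ - √(κ² - μ²))`, so that `λ(μ) = cκ` for `μ ≥ κ`. Every mode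
satisfies `|H̃(μ,s)| ≤ (1 + λs) e^{-λs} ≤ 2 e^{-λs/2}` (from `sinh x ≤ x eˣ`), and the overdamped
modes `μ < κ` moreover satisfy `H̃(μ,s) ≥ e^{-λs} > 0`. Since `λ(μ)(κ + √(κ² - μ²)) = cμ²`, we have
`Dμ² ≤ λ(μ) ≤ 2Dμ²` on `[0, κ)`.

By Tonelli, `∫₀^∞ |R(1,t+h,t)| dh ≤ 8 ∫ λ⁻¹ dG`, which is finite when `∫_{[0,κ)} μ⁻² dG` is.
Conversely, the modes `μ ≥ κ` contribute an `h`-integrable part, while the modes `μ < κ` contribute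
a nonnegative part whose `h`-integral is at least `e^{-2cκt} ∫_{[0,κ)} λ⁻¹ dG`.
-/

lemma sinh_le_mul_exp (x : ℝ) : sinh x ≤ x * exp x := by
  have h := add_one_le_exp (-(2 * x))
  have e : exp (-x) = exp x * exp (-(2 * x)) := by rw [← exp_add]; ring_nf
  rw [sinh_eq, e]
  nlinarith [exp_pos x]

lemma cosh_add_mul_sinh_le {x k : ℝ} (hk : 1 ≤ k) :
    cosh x + k * sinh x ≤ (1 + (k - 1) * x) * exp x := by
  have := mul_le_mul_of_nonneg_left (sinh_le_mul_exp x) (sub_nonneg.2 hk)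
  nlinarith [cosh_add_sinh x]

lemma exp_le_cosh_add_mul_sinh {x k : ℝ} (hx : 0 ≤ x) (hk : 1 ≤ k) :
    exp x ≤ cosh x + k * sinh x := by
  nlinarith [cosh_add_sinh x, sinh_nonneg_iff.2 hx]

lemma one_add_mul_exp_neg_le (x : ℝ) :
    (1 + x) * exp (-x) ≤ 2 * exp (-(x / 2)) := by
  have h := add_one_le_exp (x / 2)
  have e : exp (-x) = exp (-(x / 2)) * exp (-(x / 2)) := by rw [← exp_add]; ring_nf
  have e' : exp (x / 2) * exp (-(x / 2)) = 1 := by rw [← exp_add]; simp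
  rw [e]
  nlinarith [exp_pos (-(x / 2))]

lemma sqrt_sq_sub_sq_le {κ : ℝ} (hκ : 0 ≤ κ) (μ : ℝ) : √(κ ^ 2 - μ ^ 2) ≤ κ :=
  (Real.sqrt_le_sqrt (sub_le_self _ (sq_nonneg μ))).trans_eq (Real.sqrt_sq hκ)

lemma lintegral_Ici_exp_neg_mul {r : ℝ} (hr : 0 ≤ r) :
    ∫⁻ h in Ici (0 : ℝ), ENNReal.ofReal (exp (-(r * h))) = (ENNReal.ofReal r)⁻¹ := by
  obtain rfl | hr := hr.eq_or_lt
  · simp [Real.volume_Ici]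
  · have hint : IntegrableOn (fun h : ℝ => exp (-(r * h))) (Ioi 0) := by
      simpa only [neg_mul] using exp_neg_integrableOn_Ioi 0 hr
    rw [← setLIntegral_congr Ioi_ae_eq_Ici,
      ← ofReal_integral_eq_lintegral_ofReal hint (ae_of_all _ fun _ => (exp_pos _).le)]
    simp_rw [← neg_mul]
    rw [integral_exp_mul_Ioi (neg_lt_zero.2 hr), ← ENNReal.ofReal_inv_of_pos hr]
    simp

-- The decay rate of the mode `H̃(μ, ·)`. For `μ ≥ κ = c/(2D)` the square root is `0` (`Real.sqrt` of
-- a negative number), which gives the rate `cκ` of the oscillating modes.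
noncomputable def decayRate (c D μ : ℝ) : ℝ :=
  c * (c / (2 * D) - √((c / (2 * D)) ^ 2 - μ ^ 2))

section decayRate

variable {c D μ : ℝ}

lemma decayRate_nonneg (hc : 0 ≤ c) (hD : 0 ≤ D) : 0 ≤ decayRate c D μ :=
  mul_nonneg hc (sub_nonneg.2 (sqrt_sq_sub_sq_le (by positivity) μ))

lemma decayRate_le (hc : 0 ≤ c) : decayRate c D μ ≤ c * (c / (2 * D)) :=
  mul_le_mul_of_nonneg_left (sub_le_self _ (Real.sqrt_nonneg _)) hc

lemma decayRate_of_le (hc : 0 ≤ c) (hD : 0 ≤ D) (hμ : c / (2 * D) ≤ μ) :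
    decayRate c D μ = c * (c / (2 * D)) := by
  have : 0 ≤ c / (2 * D) := by positivity
  rw [decayRate, Real.sqrt_eq_zero'.2 (by nlinarith), sub_zero]

lemma decayRate_mul_add_sqrt (hμ : μ ^ 2 ≤ (c / (2 * D)) ^ 2) :
    decayRate c D μ * (c / (2 * D) + √((c / (2 * D)) ^ 2 - μ ^ 2)) = c * μ ^ 2 := by
  have := Real.sq_sqrt (sub_nonneg.2 hμ)
  rw [decayRate]
  linear_combination (-c) * this

lemma mul_sq_le_decayRate (hc : 0 < c) (hD : 0 < D) (hμ₀ : 0 ≤ μ) (hμ : μ ≤ c / (2 * D)) :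
    D * μ ^ 2 ≤ decayRate c D μ := by
  have key := decayRate_mul_add_sqrt (c := c) (D := D) (μ := μ) (by gcongr)
  have ha := sqrt_sq_sub_sq_le (by positivity : 0 ≤ c / (2 * D)) μ
  have hκ : 2 * D * (c / (2 * D)) = c := by field_simp
  have hr := decayRate_nonneg (μ := μ) hc.le hD.le
  nlinarith [mul_le_mul_of_nonneg_left ha hr]

lemma decayRate_le_mul_sq (hc : 0 < c) (hD : 0 < D) (hμ₀ : 0 ≤ μ) (hμ : μ ≤ c / (2 * D)) :
    decayRate c D μ ≤ 2 * D * μ ^ 2 := by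
  have key := decayRate_mul_add_sqrt (c := c) (D := D) (μ := μ) (by gcongr)
  have hκ : 2 * D * (c / (2 * D)) = c := by field_simp
  have hr := decayRate_nonneg (μ := μ) hc.le hD.le
  nlinarith [mul_nonneg hr (Real.sqrt_nonneg ((c / (2 * D)) ^ 2 - μ ^ 2))]

end decayRate

lemma measurable_decayRate (c D : ℝ) : Measurable (decayRate c D) := by
  unfold decayRate
  fun_prop

lemma measurable_Htilde (c D s : ℝ) : Measurable fun μ => Htilde c D μ s := by
  unfold Htilde Htilde1 Htilde2
  exact Measurable.ite (measurableSet_lt measurable_id measurable_const) (by fun_prop)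
    (Measurable.ite (measurableSet_eq_fun measurable_id measurable_const) measurable_const
      (by fun_prop))

lemma Htilde1_eq (c D μ s : ℝ) :
    Htilde1 c D μ s = exp (-(c * (c / (2 * D)) * s)) *
      (cosh (c * s * √((c / (2 * D)) ^ 2 - μ ^ 2)) +
        c / (2 * D) / √((c / (2 * D)) ^ 2 - μ ^ 2) *
          sinh (c * s * √((c / (2 * D)) ^ 2 - μ ^ 2))) := by
  rw [Htilde1, div_div]
  ring_nf

lemma Htilde2_eq (c D μ s : ℝ) :
    Htilde2 c D μ s = exp (-(c * (c / (2 * D)) * s)) *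
      (cos (c * s * √(μ ^ 2 - (c / (2 * D)) ^ 2)) +
        c / (2 * D) / √(μ ^ 2 - (c / (2 * D)) ^ 2) *
          sin (c * s * √(μ ^ 2 - (c / (2 * D)) ^ 2))) := by
  rw [Htilde2, div_div]
  ring_nf

section Htilde

variable {c D s : ℝ}

lemma Htilde1_nonneg (hc : 0 < c) (hD : 0 < D) (hs : 0 ≤ s) {μ : ℝ} : 0 ≤ Htilde1 c D μ s := by
  rw [Htilde1_eq]
  have := sinh_nonneg_iff.2 (by positivity : 0 ≤ c * s * √((c / (2 * D)) ^ 2 - μ ^ 2))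
  positivity

lemma Htilde1_le (hc : 0 < c) (hD : 0 < D) (hs : 0 ≤ s) (μ : ℝ) :
    Htilde1 c D μ s ≤ (1 + decayRate c D μ * s) * exp (-(decayRate c D μ * s)) := by
  rw [Htilde1_eq, decayRate]
  have hκ : 0 ≤ c / (2 * D) := by positivity
  have haκ := sqrt_sq_sub_sq_le hκ μ
  generalize c / (2 * D) = κ at hκ haκ ⊢
  have ha₀ := Real.sqrt_nonneg (κ ^ 2 - μ ^ 2)
  generalize √(κ ^ 2 - μ ^ 2) = a at ha₀ haκ ⊢
  obtain rfl | ha := ha₀.eq_or_lt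
  · simp only [mul_zero, cosh_zero, sinh_zero, sub_zero, add_zero, mul_one]
    nlinarith [exp_pos (-(c * κ * s)), show 0 ≤ c * κ * s by positivity]
  · have hk : 1 ≤ κ / a := (one_le_div ha).2 haκ
    calc exp (-(c * κ * s)) * (cosh (c * s * a) + κ / a * sinh (c * s * a))
        ≤ exp (-(c * κ * s)) * ((1 + (κ / a - 1) * (c * s * a)) * exp (c * s * a)) := by
          gcongr
          exact cosh_add_mul_sinh_le hk
      _ = (1 + c * (κ - a) * s) * exp (-(c * (κ - a) * s)) := by
          rw [mul_left_comm, ← exp_add]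
          field_simp
          ring_nf

lemma exp_le_Htilde1 (hc : 0 < c) (hD : 0 < D) (hs : 0 ≤ s) {μ : ℝ} (hμ₀ : 0 ≤ μ)
    (hμ : μ < c / (2 * D)) : exp (-(decayRate c D μ * s)) ≤ Htilde1 c D μ s := by
  rw [Htilde1_eq, decayRate]
  set κ := c / (2 * D)
  set a := √(κ ^ 2 - μ ^ 2)
  have ha : 0 < a := Real.sqrt_pos.2 (by nlinarith)
  have hk : 1 ≤ κ / a := (one_le_div ha).2 (sqrt_sq_sub_sq_le (by positivity) μ)
  calc exp (-(c * (κ - a) * s)) = exp (-(c * κ * s)) * exp (c * s * a) := by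
        rw [← exp_add]; ring_nf
    _ ≤ exp (-(c * κ * s)) * (cosh (c * s * a) + κ / a * sinh (c * s * a)) := by
        gcongr
        exact exp_le_cosh_add_mul_sinh (by positivity) hk

lemma abs_Htilde2_le (hc : 0 < c) (hD : 0 < D) (hs : 0 ≤ s) (μ : ℝ) :
    |Htilde2 c D μ s| ≤ (1 + c * (c / (2 * D)) * s) * exp (-(c * (c / (2 * D)) * s)) := by
  rw [Htilde2_eq, abs_mul, abs_exp, mul_comm]
  set κ := c / (2 * D)
  set b := √(μ ^ 2 - κ ^ 2)
  have hb : 0 ≤ b := Real.sqrt_nonneg _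
  have hκb : 0 ≤ κ / b := by positivity
  have hy : κ / b * (c * s * b) ≤ c * κ * s := by
    obtain hb | hb := hb.eq_or_lt
    · rw [← hb]; simp only [div_zero, zero_mul]; positivity
    · exact le_of_eq (by field_simp)
  gcongr
  calc |cos (c * s * b) + κ / b * sin (c * s * b)|
      ≤ |cos (c * s * b)| + κ / b * |sin (c * s * b)| := by
        refine (abs_add_le _ _).trans_eq ?_
        rw [abs_mul, abs_of_nonneg hκb]
    _ ≤ 1 + κ / b * (c * s * b) := by
        gcongr
        · exact abs_cos_le_one _
        · exact (abs_sin_le_abs).trans_eq (abs_of_nonneg (by positivity))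
    _ ≤ 1 + c * κ * s := by linarith

lemma abs_Htilde_le (hc : 0 < c) (hD : 0 < D) (hs : 0 ≤ s) (μ : ℝ) :
    |Htilde c D μ s| ≤ (1 + decayRate c D μ * s) * exp (-(decayRate c D μ * s)) := by
  unfold Htilde
  split_ifs with h₁ h₂
  · rw [abs_of_nonneg (Htilde1_nonneg hc hD hs)]
    exact Htilde1_le hc hD hs μ
  · rw [decayRate_of_le hc.le hD.le h₂.ge, abs_of_nonneg (by positivity)]
    apply le_of_eq
    ring_nf
  · rw [decayRate_of_le hc.le hD.le (not_lt.1 h₁)]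
    exact abs_Htilde2_le hc hD hs μ

lemma abs_Htilde_le_two_mul_exp (hc : 0 < c) (hD : 0 < D) (hs : 0 ≤ s) (μ : ℝ) :
    |Htilde c D μ s| ≤ 2 * exp (-(decayRate c D μ / 2 * s)) := by
  have := one_add_mul_exp_neg_le (decayRate c D μ * s)
  rw [show decayRate c D μ * s / 2 = decayRate c D μ / 2 * s by ring] at this
  exact (abs_Htilde_le hc hD hs μ).trans this

lemma abs_Htilde_le_two (hc : 0 < c) (hD : 0 < D) (hs : 0 ≤ s) (μ : ℝ) :
    |Htilde c D μ s| ≤ 2 := by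
  have := exp_le_one_iff.2 (neg_nonpos.2 (by
    have := decayRate_nonneg (μ := μ) hc.le hD.le; positivity : 0 ≤ decayRate c D μ / 2 * s))
  linarith [abs_Htilde_le_two_mul_exp hc hD hs μ]

lemma abs_Htilde_add_mul_le (hc : 0 < c) (hD : 0 < D) {t h : ℝ} (ht : 0 ≤ t) (hh : 0 ≤ h)
    (μ : ℝ) : |Htilde c D μ (t + h) * Htilde c D μ t| ≤ 4 * exp (-(decayRate c D μ / 2 * h)) := by
  have hr := decayRate_nonneg (μ := μ) hc.le hD.le
  rw [abs_mul]
  calc |Htilde c D μ (t + h)| * |Htilde c D μ t|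
      ≤ (2 * exp (-(decayRate c D μ / 2 * (t + h)))) * (2 * exp (-(decayRate c D μ / 2 * t))) :=
        mul_le_mul (abs_Htilde_le_two_mul_exp hc hD (by positivity) μ)
          (abs_Htilde_le_two_mul_exp hc hD ht μ) (abs_nonneg _) (by positivity)
    _ = 4 * exp (-(decayRate c D μ / 2 * h)) * exp (-(decayRate c D μ * t)) := by
        rw [mul_mul_mul_comm, ← exp_add, mul_assoc 4, ← exp_add]
        ring_nf
    _ ≤ 4 * exp (-(decayRate c D μ / 2 * h)) :=
        mul_le_of_le_one_right (by positivity) (exp_le_one_iff.2 (by nlinarith))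

lemma integrable_Htilde_mul {G : Measure ℝ} [IsFiniteMeasure G] (hc : 0 < c) (hD : 0 < D)
    {s s' : ℝ} (hs : 0 ≤ s) (hs' : 0 ≤ s') :
    Integrable (fun μ => Htilde c D μ s * Htilde c D μ s') G := by
  refine Integrable.mono' (integrable_const (2 * 2))
    ((measurable_Htilde c D s).mul (measurable_Htilde c D s')).aestronglyMeasurable
    (ae_of_all _ fun μ => ?_)
  rw [Real.norm_eq_abs, abs_mul]
  exact mul_le_mul (abs_Htilde_le_two hc hD hs μ) (abs_Htilde_le_two hc hD hs' μ)
    (abs_nonneg _) zero_le_two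

end Htilde

-- The part of `R(1, s, s')` carried by the frequencies in `S`.
noncomputable def spectralCov (c D : ℝ) (G : Measure ℝ) (S : Set ℝ) (s s' : ℝ) : ℝ :=
  ∫ μ in S, Htilde c D μ s * Htilde c D μ s' ∂G

section spectralCov

variable {c D t : ℝ} {G : Measure ℝ}

lemma spectralCov_Ici_zero_eq_add [IsFiniteMeasure G] (hc : 0 < c) (hD : 0 < D) {s s' : ℝ}
    (hs : 0 ≤ s) (hs' : 0 ≤ s') :
    spectralCov c D G (Ici 0) s s' =
      spectralCov c D G (Ico 0 (c / (2 * D))) s s' + spectralCov c D G (Ici (c / (2 * D))) s s' := by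
  have hint := integrable_Htilde_mul (G := G) hc hD hs hs'
  rw [spectralCov, ← Ico_union_Ici_eq_Ici (by positivity : (0 : ℝ) ≤ c / (2 * D)),
    setIntegral_union ((Iio_disjoint_Ici le_rfl).mono_left Ico_subset_Iio_self) measurableSet_Ici
      hint.integrableOn hint.integrableOn]
  rfl

lemma ofReal_abs_spectralCov_le (hc : 0 < c) (hD : 0 < D) (ht : 0 ≤ t) {h : ℝ} (hh : 0 ≤ h)
    (S : Set ℝ) :
    ENNReal.ofReal |spectralCov c D G S (t + h) t| ≤
      ∫⁻ μ in S, ENNReal.ofReal (4 * exp (-(decayRate c D μ / 2 * h))) ∂G := by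
  rw [← Real.enorm_eq_ofReal_abs]
  refine (enorm_integral_le_lintegral_enorm _).trans (lintegral_mono fun μ => ?_)
  rw [Real.enorm_eq_ofReal_abs]
  exact ENNReal.ofReal_le_ofReal (abs_Htilde_add_mul_le hc hD ht hh μ)

lemma measurable_ofReal_mul_exp_neg_decayRate (c D : ℝ) :
    Measurable (Function.uncurry fun h μ : ℝ =>
      ENNReal.ofReal (4 * exp (-(decayRate c D μ / 2 * h)))) := by
  have := measurable_decayRate c D
  unfold Function.uncurry
  fun_prop

lemma lintegral_Ici_lintegral_exp_neg_decayRate [SFinite G] (hc : 0 < c) (hD : 0 < D)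
    (S : Set ℝ) :
    ∫⁻ h in Ici 0, ∫⁻ μ in S, ENNReal.ofReal (4 * exp (-(decayRate c D μ / 2 * h))) ∂G =
      8 * ∫⁻ μ in S, (ENNReal.ofReal (decayRate c D μ))⁻¹ ∂G := by
  rw [lintegral_lintegral_swap (measurable_ofReal_mul_exp_neg_decayRate c D).aemeasurable,
    ← lintegral_const_mul' _ _ (by norm_num)]
  refine lintegral_congr fun μ => ?_
  have hr := decayRate_nonneg (μ := μ) hc.le hD.le
  simp_rw [ENNReal.ofReal_mul (by norm_num : (0 : ℝ) ≤ 4)]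
  rw [lintegral_const_mul' _ _ ENNReal.ofReal_ne_top, lintegral_Ici_exp_neg_mul (by positivity),
    ENNReal.ofReal_div_of_pos two_pos, ENNReal.inv_div (by simp) (by simp), div_eq_mul_inv,
    ← mul_assoc]
  norm_num

lemma lintegral_abs_spectralCov_le [SFinite G] (hc : 0 < c) (hD : 0 < D) (ht : 0 ≤ t)
    (S : Set ℝ) :
    ∫⁻ h in Ici 0, ENNReal.ofReal |spectralCov c D G S (t + h) t| ≤
      8 * ∫⁻ μ in S, (ENNReal.ofReal (decayRate c D μ))⁻¹ ∂G :=
  (setLIntegral_mono' measurableSet_Ici fun _ hh => ofReal_abs_spectralCov_le hc hD ht hh S).trans_eq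
    (lintegral_Ici_lintegral_exp_neg_decayRate hc hD S)

lemma ofReal_spectralCov_Ico_le [IsFiniteMeasure G] (hc : 0 < c) (hD : 0 < D) (ht : 0 ≤ t)
    {h : ℝ} (hh : 0 ≤ h) :
    ENNReal.ofReal (spectralCov c D G (Ico 0 (c / (2 * D))) (t + h) t) ≤
      ENNReal.ofReal |spectralCov c D G (Ici 0) (t + h) t| +
        ∫⁻ μ in Ici (c / (2 * D)), ENNReal.ofReal (4 * exp (-(decayRate c D μ / 2 * h))) ∂G := by
  rw [spectralCov_Ici_zero_eq_add hc hD (by positivity) ht]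
  refine le_trans ?_ (add_le_add le_rfl (ofReal_abs_spectralCov_le hc hD ht hh _))
  refine (ENNReal.ofReal_le_ofReal ?_).trans ENNReal.ofReal_add_le
  linarith [le_abs_self (spectralCov c D G (Ico 0 (c / (2 * D))) (t + h) t +
    spectralCov c D G (Ici (c / (2 * D))) (t + h) t),
    neg_abs_le (spectralCov c D G (Ici (c / (2 * D))) (t + h) t)]

lemma lintegral_ofReal_spectralCov_Ico_le [IsFiniteMeasure G] (hc : 0 < c) (hD : 0 < D)
    (ht : 0 ≤ t) :
    ∫⁻ h in Ici 0, ENNReal.ofReal (spectralCov c D G (Ico 0 (c / (2 * D))) (t + h) t) ≤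
      (∫⁻ h in Ici 0, ENNReal.ofReal |spectralCov c D G (Ici 0) (t + h) t|) +
        8 * ∫⁻ μ in Ici (c / (2 * D)), (ENNReal.ofReal (decayRate c D μ))⁻¹ ∂G := by
  have hm : Measurable fun h => ∫⁻ μ in Ici (c / (2 * D)),
      ENNReal.ofReal (4 * exp (-(decayRate c D μ / 2 * h))) ∂G :=
    (measurable_ofReal_mul_exp_neg_decayRate c D).lintegral_prod_right'
  calc _ ≤ ∫⁻ h in Ici 0, (ENNReal.ofReal |spectralCov c D G (Ici 0) (t + h) t| +
          ∫⁻ μ in Ici (c / (2 * D)), ENNReal.ofReal (4 * exp (-(decayRate c D μ / 2 * h))) ∂G) :=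
        setLIntegral_mono' measurableSet_Ici fun _ hh => ofReal_spectralCov_Ico_le hc hD ht hh
    _ = _ := by rw [lintegral_add_right _ hm, lintegral_Ici_lintegral_exp_neg_decayRate hc hD]

lemma lintegral_exp_le_ofReal_spectralCov_Ico [IsFiniteMeasure G] (hc : 0 < c) (hD : 0 < D)
    (ht : 0 ≤ t) {h : ℝ} (hh : 0 ≤ h) :
    ∫⁻ μ in Ico 0 (c / (2 * D)), ENNReal.ofReal (exp (-(decayRate c D μ * (2 * t + h)))) ∂G ≤
      ENNReal.ofReal (spectralCov c D G (Ico 0 (c / (2 * D))) (t + h) t) := by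
  have hth : 0 ≤ t + h := by positivity
  rw [spectralCov, ofReal_integral_eq_lintegral_ofReal
    (integrable_Htilde_mul hc hD hth ht).integrableOn ?_]
  · refine setLIntegral_mono' measurableSet_Ico fun μ hμ => ENNReal.ofReal_le_ofReal ?_
    simp only [Htilde, if_pos hμ.2]
    calc exp (-(decayRate c D μ * (2 * t + h)))
        = exp (-(decayRate c D μ * (t + h))) * exp (-(decayRate c D μ * t)) := by
          rw [← exp_add]; ring_nf
      _ ≤ Htilde1 c D μ (t + h) * Htilde1 c D μ t :=
          mul_le_mul (exp_le_Htilde1 hc hD hth hμ.1 hμ.2) (exp_le_Htilde1 hc hD ht hμ.1 hμ.2)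
            (exp_pos _).le (Htilde1_nonneg hc hD hth)
  · filter_upwards [ae_restrict_mem measurableSet_Ico] with μ hμ
    simp only [Htilde, if_pos hμ.2]
    exact mul_nonneg (Htilde1_nonneg hc hD hth) (Htilde1_nonneg hc hD ht)

lemma ofReal_exp_mul_lintegral_inv_decayRate_le [IsFiniteMeasure G] (hc : 0 < c) (hD : 0 < D)
    (ht : 0 ≤ t) :
    ENNReal.ofReal (exp (-(c * (c / (2 * D)) * (2 * t)))) *
        ∫⁻ μ in Ico 0 (c / (2 * D)), (ENNReal.ofReal (decayRate c D μ))⁻¹ ∂G ≤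
      ∫⁻ h in Ici 0, ENNReal.ofReal (spectralCov c D G (Ico 0 (c / (2 * D))) (t + h) t) := by
  have hm : Measurable (Function.uncurry fun h μ : ℝ =>
      ENNReal.ofReal (exp (-(decayRate c D μ * (2 * t + h))))) := by
    have := measurable_decayRate c D
    unfold Function.uncurry
    fun_prop
  calc _ ≤ ∫⁻ μ in Ico 0 (c / (2 * D)), ∫⁻ h in Ici 0,
          ENNReal.ofReal (exp (-(decayRate c D μ * (2 * t + h)))) ∂volume ∂G := by
        rw [← lintegral_const_mul' _ _ ENNReal.ofReal_ne_top]
        refine setLIntegral_mono' measurableSet_Ico fun μ _ => ?_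
        have hr := decayRate_nonneg (μ := μ) hc.le hD.le
        simp_rw [mul_add, neg_add, exp_add, ENNReal.ofReal_mul (exp_pos _).le]
        rw [lintegral_const_mul' _ _ ENNReal.ofReal_ne_top, lintegral_Ici_exp_neg_mul hr]
        gcongr
        exact decayRate_le hc.le
    _ = ∫⁻ h in Ici 0, ∫⁻ μ in Ico 0 (c / (2 * D)),
          ENNReal.ofReal (exp (-(decayRate c D μ * (2 * t + h)))) ∂G :=
        (lintegral_lintegral_swap hm.aemeasurable).symm
    _ ≤ _ := setLIntegral_mono' measurableSet_Ici fun _ hh =>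
        lintegral_exp_le_ofReal_spectralCov_Ico hc hD ht hh

lemma lintegral_inv_decayRate_lt_top_iff (hc : 0 < c) (hD : 0 < D) :
    ∫⁻ μ in Ico 0 (c / (2 * D)), (ENNReal.ofReal (decayRate c D μ))⁻¹ ∂G < ⊤ ↔
      ∫⁻ μ in Ico 0 (c / (2 * D)), (ENNReal.ofReal (μ ^ 2))⁻¹ ∂G < ⊤ := by
  have inv_ofReal_mul : ∀ {a : ℝ}, 0 < a → ∀ b : ℝ,
      (ENNReal.ofReal (a * b))⁻¹ = (ENNReal.ofReal a)⁻¹ * (ENNReal.ofReal b)⁻¹ := fun ha b => by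
    rw [ENNReal.ofReal_mul ha.le, ENNReal.mul_inv (Or.inr ENNReal.ofReal_ne_top)
      (Or.inl ENNReal.ofReal_ne_top)]
  have h2D : (ENNReal.ofReal (2 * D))⁻¹ ≠ ⊤ :=
    ENNReal.inv_ne_top.2 (ENNReal.ofReal_pos.2 (by positivity)).ne'
  have hD' : (ENNReal.ofReal D)⁻¹ ≠ ⊤ := ENNReal.inv_ne_top.2 (ENNReal.ofReal_pos.2 hD).ne'
  constructor
  · intro h
    refine ENNReal.lt_top_of_mul_ne_top_right (a := (ENNReal.ofReal (2 * D))⁻¹) ?_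
      (ENNReal.inv_ne_zero.2 ENNReal.ofReal_ne_top)
    rw [← lintegral_const_mul' _ _ h2D]
    refine ((setLIntegral_mono' measurableSet_Ico fun μ hμ => ?_).trans_lt h).ne
    rw [← inv_ofReal_mul (by positivity)]
    exact ENNReal.inv_le_inv.2 (ENNReal.ofReal_le_ofReal
      (decayRate_le_mul_sq hc hD hμ.1 hμ.2.le))
  · intro h
    calc _ ≤ ∫⁻ μ in Ico 0 (c / (2 * D)), (ENNReal.ofReal D)⁻¹ * (ENNReal.ofReal (μ ^ 2))⁻¹ ∂G :=
          setLIntegral_mono' measurableSet_Ico fun μ hμ => by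
            rw [← inv_ofReal_mul hD]
            exact ENNReal.inv_le_inv.2
              (ENNReal.ofReal_le_ofReal (mul_sq_le_decayRate hc hD hμ.1 hμ.2.le))
      _ < ⊤ := by
          rw [lintegral_const_mul' _ _ hD']
          exact ENNReal.mul_lt_top hD'.lt_top h

lemma lintegral_Ici_inv_decayRate_lt_top [IsFiniteMeasure G] (hc : 0 < c) (hD : 0 < D) :
    ∫⁻ μ in Ici (c / (2 * D)), (ENNReal.ofReal (decayRate c D μ))⁻¹ ∂G < ⊤ := by
  rw [setLIntegral_congr_fun (g := fun _ => (ENNReal.ofReal (c * (c / (2 * D))))⁻¹)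
    measurableSet_Ici fun μ hμ => by rw [decayRate_of_le hc.le hD.le hμ], setLIntegral_const]
  exact ENNReal.mul_lt_top (ENNReal.inv_lt_top.2 (ENNReal.ofReal_pos.2 (by positivity)))
    (measure_lt_top _ _)

end spectralCov

theorem short_range_dependence_coincident
    (c D : ℝ) (hc : 0 < c) (hD : 0 < D)
    (G : MeasureTheory.Measure ℝ) [MeasureTheory.IsFiniteMeasure G]
    (t : ℝ) (ht : 0 ≤ t) :
    (∫⁻ h in Set.Ici (0 : ℝ),
        ENNReal.ofReal
          |∫ μ in Set.Ici (0 : ℝ), Htilde c D μ (t + h) * Htilde c D μ t ∂G| ∂volume) < ⊤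
      ↔ (∫⁻ μ in Set.Ico (0 : ℝ) (c / (2 * D)), (ENNReal.ofReal (μ ^ 2))⁻¹ ∂G) < ⊤ := by
  change ∫⁻ h in Ici 0, ENNReal.ofReal |spectralCov c D G (Ici 0) (t + h) t| < ⊤ ↔ _
  rw [← lintegral_inv_decayRate_lt_top_iff hc hD]
  have hhigh := lintegral_Ici_inv_decayRate_lt_top (G := G) hc hD
  constructor
  · intro hR
    refine ENNReal.lt_top_of_mul_ne_top_right
      (((ofReal_exp_mul_lintegral_inv_decayRate_le hc hD ht).trans
        (lintegral_ofReal_spectralCov_Ico_le hc hD ht)).trans_lt ?_).ne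
      (ENNReal.ofReal_pos.2 (exp_pos _)).ne'
    exact ENNReal.add_lt_top.2 ⟨hR, ENNReal.mul_lt_top (by norm_num) hhigh⟩
  · intro hlow
    refine (lintegral_abs_spectralCov_le hc hD ht (Ici 0)).trans_lt
      (ENNReal.mul_lt_top (by norm_num) ?_)
    rw [← Ico_union_Ici_eq_Ici (by positivity : (0 : ℝ) ≤ c / (2 * D)),
      lintegral_union measurableSet_Ici ((Iio_disjoint_Ici le_rfl).mono_left Ico_subset_Iio_self)]
    exact ENNReal.add_lt_top.2 ⟨hlow, hhigh⟩
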